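/- arXiv:1707.07593 — 11 statements merged into one kernel-verified Lean document; each statement's English description precedes it below -/
import Mathlib

section
/- Let X be a Polish space and b : ℕ → Set X a basic open enumeration of X. Then the set U := {(α, x) ∈ 𝒩 × X | ∃ n, x ∈ b (α n)} is open in 𝒩 × X, and for every subset A of X: A is open if and only if there exists α ∈ 𝒩 such that A = U_b(α), i.e. U is a universal set for the open subsets of X. -/
open Set

theorem isOpen_setOf_snd_mem_apply {X ι κ : Type*} [TopologicalSpace X] [TopologicalSpace ι]
    [DiscreteTopology ι] {b : ι → Set X} (hb : ∀ i, IsOpen (b i)) :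
    IsOpen {p : (κ → ι) × X | ∃ n, p.2 ∈ b (p.1 n)} := by
  have hgraph : IsOpen {q : ι × X | q.2 ∈ b q.1} := by
    have : {q : ι × X | q.2 ∈ b q.1} = ⋃ i, {i} ×ˢ b i := by ext ⟨i, x⟩; simp
    rw [this]
    exact isOpen_iUnion fun i => (isOpen_discrete _).prod (hb i)
  simp only [ofPred_exists]
  exact isOpen_iUnion fun n =>
    hgraph.preimage (f := fun p : (κ → ι) × X => (p.1 n, p.2)) (by fun_prop)

theorem TopologicalSpace.IsTopologicalBasis.exists_eq_iUnion_apply {X ι : Type*}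
    [TopologicalSpace X] {b : ι → Set X} (hbasis : IsTopologicalBasis (range b))
    (hempty : (∅ : Set X) ∈ range b) {A : Set X} (hA : IsOpen A) :
    ∃ α : ι → ι, A = ⋃ i, b (α i) := by
  classical
  obtain ⟨e, he⟩ := hempty
  -- keep the basic sets inside `A` and send every other index to a code of `∅`
  refine ⟨fun i => if b i ⊆ A then i else e, Subset.antisymm ?_ (iUnion_subset fun i => ?_)⟩
  · intro x hx
    obtain ⟨_, ⟨i, rfl⟩, hxi, hiA⟩ := hbasis.exists_subset_of_mem_open hx hA
    exact mem_iUnion.2 ⟨i, by simpa [hiA] using hxi⟩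
  · by_cases hiA : b i ⊆ A
    · simp [hiA]
    · simp [hiA, he]

theorem universal_open_set_general
    {X : Type*} [TopologicalSpace X]
    (b : ℕ → Set X)
    (hbasis : TopologicalSpace.IsTopologicalBasis (Set.range b))
    (hempty : (∅ : Set X) ∈ Set.range b) :
    IsOpen {p : (ℕ → ℕ) × X | ∃ n, p.2 ∈ b (p.1 n)} ∧
      ∀ A : Set X, IsOpen A ↔ ∃ α : ℕ → ℕ, A = ⋃ n, b (α n) := by
  have hopen : ∀ s, IsOpen (b s) := fun s => hbasis.isOpen ⟨s, rfl⟩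
  refine ⟨isOpen_setOf_snd_mem_apply hopen, fun A => ⟨hbasis.exists_eq_iUnion_apply hempty, ?_⟩⟩
  rintro ⟨α, rfl⟩
  exact isOpen_iUnion fun n => hopen (α n)

theorem universal_open_set
    {X : Type*} [TopologicalSpace X] [PolishSpace X]
    (b : ℕ → Set X)
    (hopen : ∀ s, IsOpen (b s))
    (hbasis : TopologicalSpace.IsTopologicalBasis (Set.range b))
    (hempty : (∅ : Set X) ∈ Set.range b) :
    IsOpen {p : (ℕ → ℕ) × X | ∃ n, p.2 ∈ b (p.1 n)} ∧
      ∀ A : Set X, IsOpen A ↔ ∃ α : ℕ → ℕ, A = ⋃ n, b (α n) :=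
  universal_open_set_general b hbasis hempty
end

section
/- Let X be a Polish space and b : ℕ → Set X a basic open enumeration of X. For every open set V ⊆ 𝒩 × X there exists a continuous function u : 𝒩 → 𝒩 such that for all α ∈ 𝒩 the section V_α = {x ∈ X | (α, x) ∈ V} equals U_b(u α). -/
open Set TopologicalSpace

/-!
The Baire space is second countable and zero-dimensional, so it has a countable basis
`c 0, c 1, …` of clopen sets. Since `V` is open, it is the union of the boxes `c m ×ˢ b n`
contained in it, hence `V_α` is the union of the `b n` over those boxes with `α ∈ c m`.
Enumerating all pairs `(m, n)` and replacing the unsuitable ones by a code of `∅` gives a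
sequence `u α` whose `k`-th term depends on `α` only through membership in a clopen set,
so `u` is continuous.
-/

section SectionCode

variable {Y X : Type*} [TopologicalSpace Y]

theorem exists_nat_isClopen_isTopologicalBasis [SecondCountableTopology Y] [Nonempty Y]
    (h : IsTopologicalBasis {s : Set Y | IsClopen s}) :
    ∃ c : ℕ → Set Y, (∀ m, IsClopen (c m)) ∧ IsTopologicalBasis (range c) := by
  obtain ⟨S, hS_clopen, hS_countable, hS⟩ := h.exists_countable
  have hS_nonempty : S.Nonempty := by
    obtain ⟨s, hs, -⟩ := mem_sUnion.mp (hS.sUnion_eq ▸ mem_univ (Classical.arbitrary Y))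
    exact ⟨s, hs⟩
  obtain ⟨c, rfl⟩ := hS_countable.exists_eq_range hS_nonempty
  exact ⟨c, fun m => hS_clopen (mem_range_self m), hS⟩

open Classical in
noncomputable def sectionCode (c : ℕ → Set Y) (b : ℕ → Set X) (V : Set (Y × X)) (e : ℕ)
    (y : Y) (k : ℕ) : ℕ :=
  if y ∈ c k.unpair.1 ∧ c k.unpair.1 ×ˢ b k.unpair.2 ⊆ V then k.unpair.2 else e

variable {c : ℕ → Set Y} {b : ℕ → Set X} {V : Set (Y × X)} {e : ℕ}

theorem continuous_sectionCode (hc : ∀ m, IsClopen (c m)) :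
    Continuous (sectionCode c b V e) := by
  classical
  refine continuous_pi fun k => ?_
  by_cases hbox : c k.unpair.1 ×ˢ b k.unpair.2 ⊆ V
  · simp only [sectionCode, hbox, and_true]
    exact continuous_const.if (by simp [(hc _).frontier_eq]) continuous_const
  · simpa [sectionCode, hbox] using continuous_const

theorem iUnion_sectionCode [TopologicalSpace X] (hc : IsTopologicalBasis (range c))
    (hb : IsTopologicalBasis (range b)) (he : b e = ∅) (hV : IsOpen V) (y : Y) :
    ⋃ k, b (sectionCode c b V e y k) = {x | (y, x) ∈ V} := by
  ext x
  simp only [mem_iUnion, mem_ofPred_eq]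
  constructor
  · rintro ⟨k, hx⟩
    unfold sectionCode at hx
    split_ifs at hx with hk
    · exact hk.2 ⟨hk.1, hx⟩
    · simp [he] at hx
  · intro hyx
    obtain ⟨_, ⟨_, ⟨m, rfl⟩, _, ⟨n, rfl⟩, rfl⟩, ⟨hy, hx⟩, hbox⟩ :=
      (hc.prod hb).exists_subset_of_mem_open hyx hV
    exact ⟨Nat.pair m n, by simpa [sectionCode, hy, hbox] using hx⟩

end SectionCode

theorem continuous_section_coding_general
    {X : Type*} [TopologicalSpace X]
    (b : ℕ → Set X)
    (hbasis : TopologicalSpace.IsTopologicalBasis (Set.range b))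
    (hempty : (∅ : Set X) ∈ Set.range b)
    (V : Set ((ℕ → ℕ) × X)) (hV : IsOpen V) :
    ∃ u : (ℕ → ℕ) → (ℕ → ℕ), Continuous u ∧
      ∀ α : ℕ → ℕ, {x : X | (α, x) ∈ V} = ⋃ n, b (u α n) := by
  obtain ⟨c, hc_clopen, hc_basis⟩ :=
    exists_nat_isClopen_isTopologicalBasis (Y := ℕ → ℕ) isTopologicalBasis_clopens
  obtain ⟨e, he⟩ := hempty
  exact ⟨sectionCode c b V e, continuous_sectionCode hc_clopen,
    fun α => (iUnion_sectionCode hc_basis hbasis he hV α).symm⟩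

theorem continuous_section_coding
    {X : Type*} [TopologicalSpace X] [PolishSpace X]
    (b : ℕ → Set X)
    (hopen : ∀ s, IsOpen (b s))
    (hbasis : TopologicalSpace.IsTopologicalBasis (Set.range b))
    (hempty : (∅ : Set X) ∈ Set.range b)
    (V : Set ((ℕ → ℕ) × X)) (hV : IsOpen V) :
    ∃ u : (ℕ → ℕ) → (ℕ → ℕ), Continuous u ∧
      ∀ α : ℕ → ℕ, {x : X | (α, x) ∈ V} = ⋃ n, b (u α n) :=
  continuous_section_coding_general b hbasis hempty V hV
end

section
/- Let X be a Polish space and b : ℕ → Set X a basic open enumeration of X. If G ⊆ 𝒩 × X has the Baire property, then there exists a continuous function u : 𝒩 → 𝒩 such that the set {α ∈ 𝒩 | the symmetric difference G_α Δ U_b(u α) is meager} is comeager in 𝒩 (i.e. for almost all α the symmetric difference of the section G_α with the open set coded by u α is meager). -/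
/-!
Let `O` be an open set with `G ∆ O` meagre. Since `𝒩` has a countable basis of clopen cylinders
`c i`, the section `O_α` is the union of those `b t` for which some `c i ∋ α` has
`c i ×ˢ b t ⊆ O`; enumerating the pairs `(i, t)` gives a code `u α` that is locally constant in
each coordinate, hence continuous. Then `G_α ∆ U_b(u α) = (G ∆ O)_α`, and by the easy half of
Kuratowski–Ulam the sections of a meagre set are meagre for comeagerly many `α`: the sections of
a dense open set `U` are dense for comeagerly many `α`, because for each basic `w` the
projection of `U ∩ (𝒩 × w)` is dense open.
-/

open Set
open scoped symmDiff

open TopologicalSpace Filter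

section KuratowskiUlam

variable {Y X : Type*} [TopologicalSpace Y] [TopologicalSpace X]

lemma dense_image_fst_inter_prod {U : Set (Y × X)} (hU : Dense U) {w : Set X} (hw : IsOpen w)
    (hne : w.Nonempty) : Dense (Prod.fst '' (U ∩ univ ×ˢ w)) := by
  refine dense_iff_inter_open.2 fun V hV ⟨y, hy⟩ => ?_
  obtain ⟨p, hpU, hpV, hpw⟩ :=
    hU.exists_mem_open (hV.prod hw) ⟨(y, hne.some), hy, hne.some_mem⟩
  exact ⟨p.1, hpV, p, ⟨hpU, trivial, hpw⟩, rfl⟩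

lemma eventually_residual_dense_section [SecondCountableTopology X] {U : Set (Y × X)}
    (hUo : IsOpen U) (hUd : Dense U) :
    ∀ᶠ y in residual Y, Dense {x | (y, x) ∈ U} := by
  have hmeets :
      ∀ w ∈ countableBasis X, ∀ᶠ y in residual Y, (w ∩ {x | (y, x) ∈ U}).Nonempty := by
    intro w hw
    have hwo := isOpen_of_mem_countableBasis hw
    refine mem_of_superset (residual_of_dense_open
      (isOpenMap_fst _ (hUo.inter (isOpen_univ.prod hwo)))
      (dense_image_fst_inter_prod hUd hwo (nonempty_of_mem_countableBasis hw))) ?_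
    · rintro _ ⟨p, ⟨hpU, -, hpw⟩, rfl⟩
      exact ⟨p.2, hpw, hpU⟩
  filter_upwards [(eventually_countable_ball (countable_countableBasis X)).2 hmeets] with y hy
  exact (isBasis_countableBasis X).dense_iff.2 fun w hw _ => hy w hw

/-- The easy half of the Kuratowski–Ulam theorem. -/
theorem eventually_residual_isMeagre_section [SecondCountableTopology X] {A : Set (Y × X)}
    (hA : IsMeagre A) :
    ∀ᶠ y in residual Y, IsMeagre {x | (y, x) ∈ A} := by
  obtain ⟨S, hSo, hSd, hSc, hSA⟩ := mem_residual_iff.1 hA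
  filter_upwards [(eventually_countable_ball hSc).2 fun U hU =>
    eventually_residual_dense_section (hSo U hU) (hSd U hU)] with y hy
  refine mem_residual_iff.2 ⟨(fun U => {x | (y, x) ∈ U}) '' S, ?_, ?_, hSc.image _, ?_⟩
  · rintro _ ⟨U, hU, rfl⟩
    exact (hSo U hU).preimage (Continuous.prodMk_right y)
  · rintro _ ⟨U, hU, rfl⟩
    exact hy U hU
  · intro x hx
    exact hSA (mem_sInter.2 fun U hU => hx _ ⟨U, hU, rfl⟩)

end KuratowskiUlam

lemma exists_nat_isClopen_basis {Y : Type*} [TopologicalSpace Y] [SecondCountableTopology Y]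
    (h : IsTopologicalBasis {s : Set Y | IsClopen s}) :
    ∃ c : ℕ → Set Y, (∀ i, IsClopen (c i)) ∧ IsTopologicalBasis (range c) := by
  obtain ⟨s, hs, hsc, hsb⟩ := h.exists_countable
  obtain ⟨c, hc⟩ := (hsc.insert ∅).exists_eq_range (insert_nonempty _ _)
  refine ⟨c, fun i => ?_, hc ▸ hsb.insert_empty⟩
  obtain hi | hi := (hc ▸ mem_range_self i : c i ∈ insert ∅ s)
  · exact hi ▸ isClopen_empty
  · exact hs hi

lemma PiNat.isClopen_cylinder {E : ℕ → Type*} [∀ n, TopologicalSpace (E n)]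
    [∀ n, DiscreteTopology (E n)] (x : ∀ n, E n) (n : ℕ) : IsClopen (cylinder x n) :=
  ⟨cylinder_eq_pi x n ▸ isClosed_set_pi fun _ _ => isClosed_discrete _,
    isOpen_cylinder (E := E) x n⟩

lemma isTopologicalBasis_isClopen_baireSpace :
    IsTopologicalBasis {s : Set (ℕ → ℕ) | IsClopen s} :=
  (PiNat.isTopologicalBasis_cylinders fun _ => ℕ).of_isOpen_of_subset (fun _ hu => hu.isOpen)
    (by rintro _ ⟨x, n, rfl⟩; exact PiNat.isClopen_cylinder x n)

lemma continuous_ite_mem_isClopen {Y Z : Type*} [TopologicalSpace Y] [TopologicalSpace Z]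
    {s : Set Y} [DecidablePred (· ∈ s)] (hs : IsClopen s) (a b : Z) :
    Continuous fun y => if y ∈ s then a else b :=
  continuous_if (by simp [hs.frontier_eq]) continuousOn_const continuousOn_const

/-- `u y` lists the indices `t` of the basic sets `b t` with `c i ×ˢ b t ⊆ O` for some
`c i ∋ y`, padded by an index of `∅`; it is locally constant because the `c i` are clopen. -/
theorem exists_continuous_iUnion_eq_section {Y X : Type*} [TopologicalSpace Y]
    [TopologicalSpace X] {c : ℕ → Set Y} (hc : IsTopologicalBasis (range c))
    (hclopen : ∀ i, IsClopen (c i)) {b : ℕ → Set X} (hb : IsTopologicalBasis (range b))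
    (hempty : (∅ : Set X) ∈ range b) {O : Set (Y × X)} (hO : IsOpen O) :
    ∃ u : Y → ℕ → ℕ, Continuous u ∧ ∀ y, ⋃ n, b (u y n) = {x | (y, x) ∈ O} := by
  classical
  obtain ⟨t₀, ht₀⟩ := hempty
  let good (n : ℕ) (y : Y) : Prop := c n.unpair.1 ×ˢ b n.unpair.2 ⊆ O ∧ y ∈ c n.unpair.1
  refine ⟨fun y n => if good n y then n.unpair.2 else t₀, continuous_pi fun n => ?_,
    fun y => ?_⟩
  · by_cases hsub : c n.unpair.1 ×ˢ b n.unpair.2 ⊆ O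
    · simpa only [good, hsub, true_and] using
        continuous_ite_mem_isClopen (hclopen n.unpair.1) n.unpair.2 t₀
    · simpa only [good, hsub, false_and, if_false] using continuous_const
  refine Subset.antisymm (iUnion_subset fun n x hx => ?_) fun x hx => ?_
  · by_cases hn : good n y
    · simp only [hn, if_true] at hx
      exact hn.1 ⟨hn.2, hx⟩
    · simp only [hn, if_false, ht₀] at hx
      exact hx.elim
  · obtain ⟨_, ⟨_, ⟨i, rfl⟩, _, ⟨t, rfl⟩, rfl⟩, ⟨hyi, hxt⟩, hsub⟩ :=
      (hc.prod hb).exists_subset_of_mem_open hx hO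
    have hn : good (Nat.pair i t) y := by simpa only [good, Nat.unpair_pair] using ⟨hsub, hyi⟩
    refine mem_iUnion.2 ⟨Nat.pair i t, ?_⟩
    simpa only [if_pos hn, Nat.unpair_pair] using hxt

theorem baire_property_almost_uniformly_general
    {X : Type*} [TopologicalSpace X]
    (b : ℕ → Set X)
    (hbasis : TopologicalSpace.IsTopologicalBasis (Set.range b))
    (hempty : (∅ : Set X) ∈ Set.range b)
    (G : Set ((ℕ → ℕ) × X))
    (hG : ∃ O : Set ((ℕ → ℕ) × X), IsOpen O ∧ IsMeagre (G ∆ O)) :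
    ∃ u : (ℕ → ℕ) → (ℕ → ℕ), Continuous u ∧
      {α : ℕ → ℕ | IsMeagre ({x : X | (α, x) ∈ G} ∆ (⋃ n, b (u α n)))}
        ∈ residual (ℕ → ℕ) := by
  obtain ⟨O, hO, hGO⟩ := hG
  have := hbasis.secondCountableTopology (countable_range b)
  obtain ⟨c, hclopen, hc⟩ := exists_nat_isClopen_basis isTopologicalBasis_isClopen_baireSpace
  obtain ⟨u, hu, hsection⟩ := exists_continuous_iUnion_eq_section hc hclopen hbasis hempty hO
  refine ⟨u, hu, ?_⟩
  filter_upwards [eventually_residual_isMeagre_section hGO] with α hα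
  rw [hsection α]
  exact hα

theorem baire_property_almost_uniformly
    {X : Type*} [TopologicalSpace X] [PolishSpace X]
    (b : ℕ → Set X)
    (hopen : ∀ s, IsOpen (b s))
    (hbasis : TopologicalSpace.IsTopologicalBasis (Set.range b))
    (hempty : (∅ : Set X) ∈ Set.range b)
    (G : Set ((ℕ → ℕ) × X))
    (hG : ∃ O : Set ((ℕ → ℕ) × X), IsOpen O ∧ IsMeagre (G ∆ O)) :
    ∃ u : (ℕ → ℕ) → (ℕ → ℕ), Continuous u ∧
      {α : ℕ → ℕ | IsMeagre ({x : X | (α, x) ∈ G} ∆ (⋃ n, b (u α n)))}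
        ∈ residual (ℕ → ℕ) :=
  baire_property_almost_uniformly_general b hbasis hempty G hG
end

section
/- Let X be a Polish space and b : ℕ → Set X a basic open enumeration of X. If G ⊆ 𝒩 × X is an analytic set, then there exists a continuous function u : 𝒩 → 𝒩 such that the set {α ∈ 𝒩 | the symmetric difference G_α Δ U_b(u α) is meager} is comeager in 𝒩. -/
/-!
Analytic sets have the Baire property. For continuous `f : 𝒩 → Y`, take Baire measurable
envelopes `H l` of the images under `f` of the cylinders `[l]`. The points lying in some `H l` but
in no `H (a :: l)` form a meagre set, and any other point `y` of `H []` follows a branch `x` with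
`y` in the closure of the image of every cylinder around `x`, so `y = f x`. Hence `G` differs from
an open `U ⊆ 𝒩 × X` by a meagre set. By the easy half of the Kuratowski–Ulam theorem, for comeagre
many `α` the section `G_α` differs from `U_α` by a meagre set, and `U_α` is the union of the `b k`
over the basic rectangles `[l] × b k ⊆ U` with `α ∈ [l]`, an enumeration that depends
continuously on `α`.
-/

open Set MeasureTheory Filter Topology PiNat
open scoped symmDiff

theorem residualEq_iff_isMeagre_symmDiff {α : Type*} [TopologicalSpace α] {s t : Set α} :
    s =ᵇ t ↔ IsMeagre (s ∆ t) := by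
  simp_rw [IsMeagre, compl_symmDiff, eventuallyEq_set, ← Set.mem_bihimp_iff]
  rfl

theorem IsOpen.eventually_dense_preimage_prodMk {α β : Type*} [TopologicalSpace α]
    [TopologicalSpace β] [SecondCountableTopology β] {U : Set (α × β)} (hU : IsOpen U)
    (hd : Dense U) : ∀ᵇ a : α, Dense (Prod.mk a ⁻¹' U) := by
  let B := {V ∈ TopologicalSpace.countableBasis β | V.Nonempty}
  have hB := TopologicalSpace.isBasis_countableBasis β
  have hmeets : ∀ V ∈ B, ∀ᵇ a : α, (Prod.mk a ⁻¹' U ∩ V).Nonempty := by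
    rintro V ⟨hV, hVne⟩
    refine residual_of_dense_open ?_ ?_
    · have : {a : α | (Prod.mk a ⁻¹' U ∩ V).Nonempty} = Prod.fst '' (U ∩ univ ×ˢ V) := by
        ext a; simp [Set.Nonempty]
      rw [this]
      exact isOpenMap_fst _ (hU.inter (isOpen_univ.prod (hB.isOpen hV)))
    · refine dense_iff_inter_open.2 fun O hO hOne => ?_
      obtain ⟨⟨a, x⟩, ⟨ha, hx⟩, hxU⟩ :=
        hd.inter_open_nonempty _ (hO.prod (hB.isOpen hV)) (hOne.prod hVne)
      exact ⟨a, ha, x, hxU, hx⟩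
  filter_upwards [(countable_bInter_mem
    ((TopologicalSpace.countable_countableBasis β).mono (sep_subset _ _))).2 hmeets] with a ha
  exact hB.dense_iff.2 fun V hV hVne => inter_comm V _ ▸ mem_iInter₂.1 ha V ⟨hV, hVne⟩

theorem eventually_preimage_prodMk_mem_residual {α β : Type*} [TopologicalSpace α]
    [TopologicalSpace β] [SecondCountableTopology β] {s : Set (α × β)}
    (hs : s ∈ residual (α × β)) : ∀ᵇ a : α, Prod.mk a ⁻¹' s ∈ residual β := by
  obtain ⟨S, hSo, hSd, hSc, hSs⟩ := mem_residual_iff.1 hs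
  filter_upwards [(countable_bInter_mem hSc).2 fun t ht =>
    (hSo t ht).eventually_dense_preimage_prodMk (hSd t ht)] with a ha
  refine mem_of_superset ((countable_bInter_mem hSc).2 fun t ht => ?_)
    (fun x hx => hSs (mem_sInter.2 fun t ht => mem_iInter₂.1 hx t ht))
  exact residual_of_dense_open ((hSo t ht).preimage (Continuous.prodMk_right a))
    (mem_iInter₂.1 ha t ht)

theorem IsMeagre.eventually_isMeagre_preimage_prodMk {α β : Type*} [TopologicalSpace α]
    [TopologicalSpace β] [SecondCountableTopology β] {s : Set (α × β)} (hs : IsMeagre s) :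
    ∀ᵇ a : α, IsMeagre (Prod.mk a ⁻¹' s) :=
  eventually_preimage_prodMk_mem_residual hs

theorem exists_baireMeasurableSet_envelope {α : Type*} [TopologicalSpace α]
    [SecondCountableTopology α] (A : Set α) :
    ∃ H : Set α, BaireMeasurableSet H ∧ A ⊆ H ∧ H ⊆ closure A ∧
      ∀ Z : Set α, BaireMeasurableSet Z → Z ⊆ H \ A → IsMeagre Z := by
  -- `U` is the largest open set in which `A` is meagre.
  set 𝒱 := {V : Set α | IsOpen V ∧ IsMeagre (V ∩ A)}
  set U := ⋃₀ 𝒱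
  have hUo : IsOpen U := isOpen_sUnion fun V hV => hV.1
  have hUA : IsMeagre (U ∩ A) := by
    obtain ⟨T, hTc, hTsub, hTU⟩ := TopologicalSpace.isOpen_sUnion_countable 𝒱 fun V hV => hV.1
    rw [show U = ⋃₀ T from hTU.symm, sUnion_eq_biUnion, iUnion₂_inter]
    exact isMeagre_biUnion hTc fun V hV => (hTsub hV).2
  refine ⟨A ∪ closure A \ U, ?_, subset_union_left,
    union_subset subset_closure sdiff_subset, fun Z hZ hZsub => ?_⟩
  · refine ((isClosed_closure (s := A)).isOpen_compl.baireMeasurableSet.of_compl.diff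
      hUo.baireMeasurableSet).congr (residualEq_iff_isMeagre_symmDiff.2 (hUA.mono ?_))
    rintro x (⟨hx, hxA⟩ | ⟨hxA | hx, hxc⟩)
    · exact absurd (Or.inr hx) hxA
    · exact ⟨of_not_not fun hxU => hxc ⟨subset_closure hxA, hxU⟩, hxA⟩
    · exact absurd hx hxc
  obtain ⟨W, hWo, hZW⟩ := hZ.residualEq_isOpen
  replace hZW := residualEq_iff_isMeagre_symmDiff.1 hZW
  have hWU : W ⊆ U :=
    subset_sUnion_of_mem ⟨hWo, hZW.mono fun x hx => Or.inr ⟨hx.1, fun hxZ => (hZsub hxZ).2 hx.2⟩⟩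
  refine hZW.mono fun x hxZ => Or.inl ⟨hxZ, fun hxW => ?_⟩
  obtain ⟨hxH, hxA⟩ := hZsub hxZ
  exact hxH.elim hxA fun hx => hx.2 (hWU hxW)

section ListCylinder

variable {α : Type*}

/-- `res x n` lists `x (n - 1), …, x 0` in this order, so `a :: l` extends `l`. -/
def listCylinder (l : List α) : Set (ℕ → α) :=
  {x | res x l.length = l}

theorem listCylinder_res (x : ℕ → α) (n : ℕ) : listCylinder (res x n) = cylinder x n := by
  ext y
  simp [listCylinder, cylinder_eq_res, res_length]

theorem listCylinder_nil : listCylinder ([] : List α) = univ := by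
  ext x
  simp [listCylinder]

theorem listCylinder_eq_iUnion_cons (l : List α) : listCylinder l = ⋃ a, listCylinder (a :: l) := by
  ext x
  simp [listCylinder, res_succ]

theorem exists_forall_res_of_forall_exists_cons {P : List α → Prop} (h₀ : P [])
    (h : ∀ l, P l → ∃ a, P (a :: l)) : ∃ x : ℕ → α, ∀ n, P (res x n) := by
  choose next hnext using h
  let branch : ℕ → {l // P l} := fun n =>
    Nat.rec ⟨[], h₀⟩ (fun _ l => ⟨next l.1 l.2 :: l.1, hnext l.1 l.2⟩) n
  let x : ℕ → α := fun n => next (branch n).1 (branch n).2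
  have hres : ∀ n, res x n = (branch n).1 := by
    intro n
    induction n with
    | zero => rfl
    | succ n ih => rw [res_succ, ih]
  exact ⟨x, fun n => hres n ▸ (branch n).2⟩

variable [TopologicalSpace α] [DiscreteTopology α]

theorem continuous_of_res_eq {β : Type*} [TopologicalSpace β] {f : (ℕ → α) → β} (n : ℕ)
    (hf : ∀ x y, res x n = res y n → f x = f y) : Continuous f := by
  refine continuous_iff_continuousAt.2 fun x => (continuousAt_const (y := f x)).congr ?_
  filter_upwards [(isOpen_cylinder _ x n).mem_nhds (self_mem_cylinder x n)] with y hy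
  rw [cylinder_eq_res] at hy
  exact hf x y hy.symm

theorem exists_cylinder_subset_of_mem_nhds {x : ℕ → α} {s : Set (ℕ → α)} (hs : s ∈ 𝓝 x) :
    ∃ n, cylinder x n ⊆ s := by
  obtain ⟨_, ⟨y, n, rfl⟩, hxy, hys⟩ := (isTopologicalBasis_cylinders _).mem_nhds_iff.1 hs
  exact ⟨n, mem_cylinder_iff_eq.1 hxy ▸ hys⟩

theorem eq_of_forall_mem_closure_image_cylinder {Y : Type*} [TopologicalSpace Y] [T2Space Y]
    {f : (ℕ → α) → Y} (hf : Continuous f) {x : ℕ → α} {y : Y}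
    (h : ∀ n, y ∈ closure (f '' cylinder x n)) : y = f x := by
  have : ClusterPt y (map f (𝓝 x)) := by
    refine clusterPt_iff_forall_mem_closure.2 fun s hs => ?_
    obtain ⟨n, hn⟩ := exists_cylinder_subset_of_mem_nhds hs
    exact closure_mono (image_subset_iff.2 hn) (h n)
  exact eq_of_nhds_neBot (this.mono (hf.tendsto x))

end ListCylinder

theorem Continuous.baireMeasurableSet_range {Y : Type*} [TopologicalSpace Y] [T2Space Y]
    [SecondCountableTopology Y] {f : (ℕ → ℕ) → Y} (hf : Continuous f) :
    BaireMeasurableSet (range f) := by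
  choose H hHm hAH hHc hHZ using
    fun l : List ℕ => exists_baireMeasurableSet_envelope (f '' listCylinder l)
  set M := ⋃ l, H l \ ⋃ a, H (a :: l)
  have hM : IsMeagre M := by
    refine isMeagre_iUnion fun l => hHZ l _ ((hHm l).diff (.iUnion fun a => hHm _))
      (sdiff_subset_sdiff_right ?_)
    rw [listCylinder_eq_iUnion_cons, image_iUnion]
    exact iUnion_mono fun a => hAH _
  have hrange : range f ⊆ H [] := by
    simpa [listCylinder_nil] using hAH []
  have hdiff : H [] \ range f ⊆ M := by
    rintro y ⟨hy, hyf⟩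
    by_contra hyM
    obtain ⟨x, hx⟩ := exists_forall_res_of_forall_exists_cons (P := fun l => y ∈ H l) hy
      fun l hl => by
        by_contra! h
        exact hyM (mem_iUnion.2 ⟨l, hl, by simpa using h⟩)
    exact hyf ⟨x, (eq_of_forall_mem_closure_image_cylinder hf fun n =>
      listCylinder_res x n ▸ hHc _ (hx n)).symm⟩
  refine (hHm []).congr (residualEq_iff_isMeagre_symmDiff.2 (hM.mono ?_))
  rw [Set.symmDiff_def, sdiff_eq_empty.2 hrange, union_empty]
  exact hdiff

theorem MeasureTheory.AnalyticSet.baireMeasurableSet {Y : Type*} [TopologicalSpace Y] [T2Space Y]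
    [SecondCountableTopology Y] {s : Set Y} (hs : AnalyticSet s) : BaireMeasurableSet s := by
  rw [AnalyticSet] at hs
  rcases hs with rfl | ⟨f, hf, rfl⟩
  · exact isOpen_empty.baireMeasurableSet
  · exact hf.baireMeasurableSet_range

theorem IsOpen.exists_continuous_code_preimage_prodMk {X : Type*} [TopologicalSpace X]
    {b : ℕ → Set X} (hbasis : TopologicalSpace.IsTopologicalBasis (range b))
    (hempty : (∅ : Set X) ∈ range b) {U : Set ((ℕ → ℕ) × X)} (hU : IsOpen U) :
    ∃ u : (ℕ → ℕ) → (ℕ → ℕ), Continuous u ∧ ∀ α, ⋃ n, b (u α n) = Prod.mk α ⁻¹' U := by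
  classical
  obtain ⟨k₀, hk₀⟩ := hempty
  let e : ℕ ≃ List ℕ × ℕ := (Denumerable.eqv _).symm
  let u : (ℕ → ℕ) → (ℕ → ℕ) := fun α n =>
    if α ∈ listCylinder (e n).1 ∧ listCylinder (e n).1 ×ˢ b (e n).2 ⊆ U then (e n).2 else k₀
  refine ⟨u, continuous_pi fun n => continuous_of_res_eq (e n).1.length fun α β h => ?_,
    fun α => Subset.antisymm (iUnion_subset fun n x hx => ?_) fun x hx => ?_⟩
  · exact if_congr (by simp only [listCylinder, mem_ofPred_eq, h]) rfl rfl
  · by_cases h : α ∈ listCylinder (e n).1 ∧ listCylinder (e n).1 ×ˢ b (e n).2 ⊆ U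
    · simp only [u, if_pos h] at hx
      exact h.2 ⟨h.1, hx⟩
    · simp [u, h, hk₀] at hx
  · obtain ⟨s, hs, t, ht, hst⟩ := mem_nhds_prod_iff.1 (hU.mem_nhds hx)
    obtain ⟨m, hm⟩ := exists_cylinder_subset_of_mem_nhds hs
    obtain ⟨_, ⟨k, rfl⟩, hxk, hkt⟩ := hbasis.mem_nhds_iff.1 ht
    have h : α ∈ listCylinder (res α m) ∧ listCylinder (res α m) ×ˢ b k ⊆ U := by
      rw [listCylinder_res]
      exact ⟨self_mem_cylinder α m, (prod_mono hm hkt).trans hst⟩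
    refine mem_iUnion.2 ⟨e.symm (res α m, k), ?_⟩
    simpa [u, h] using hxk

theorem analytic_baire_property_almost_uniformly_general
    {X : Type*} [TopologicalSpace X] [PolishSpace X]
    (b : ℕ → Set X)
    (hbasis : TopologicalSpace.IsTopologicalBasis (Set.range b))
    (hempty : (∅ : Set X) ∈ Set.range b)
    (G : Set ((ℕ → ℕ) × X))
    (hG : AnalyticSet G) :
    ∃ u : (ℕ → ℕ) → (ℕ → ℕ), Continuous u ∧
      {α : ℕ → ℕ | IsMeagre ({x : X | (α, x) ∈ G} ∆ (⋃ n, b (u α n)))}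
        ∈ residual (ℕ → ℕ) := by
  obtain ⟨U, hUo, hGU⟩ := hG.baireMeasurableSet.residualEq_isOpen
  obtain ⟨u, hu, hUu⟩ := hUo.exists_continuous_code_preimage_prodMk hbasis hempty
  refine ⟨u, hu, ?_⟩
  filter_upwards [(residualEq_iff_isMeagre_symmDiff.1 hGU).eventually_isMeagre_preimage_prodMk]
    with α hα
  rwa [hUu α]

theorem analytic_baire_property_almost_uniformly
    {X : Type*} [TopologicalSpace X] [PolishSpace X]
    (b : ℕ → Set X)
    (hopen : ∀ s, IsOpen (b s))
    (hbasis : TopologicalSpace.IsTopologicalBasis (Set.range b))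
    (hempty : (∅ : Set X) ∈ Set.range b)
    (G : Set ((ℕ → ℕ) × X))
    (hG : AnalyticSet G) :
    ∃ u : (ℕ → ℕ) → (ℕ → ℕ), Continuous u ∧
      {α : ℕ → ℕ | IsMeagre ({x : X | (α, x) ∈ G} ∆ (⋃ n, b (u α n)))}
        ∈ residual (ℕ → ℕ) :=
  analytic_baire_property_almost_uniformly_general b hbasis hempty G hG
end

section
/- The set Dom := {(α, n) ∈ 𝒩 × ℕ | {α}(n)↓} is a Gδ subset of 𝒩 × ℕ (a countable intersection of open sets). -/
open Set

/-- `u` is an initial segment of `β`. -/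
def IsInitSeg (β : ℕ → ℕ) (u : List ℕ) : Prop :=
  ∀ i : ℕ, ∀ h : i < u.length, β i = u.get ⟨i, h⟩

/-- The set of finite sequences enumerated by `α` at argument `n`. -/
def codeSet (α : ℕ → ℕ) (n : ℕ) : Set (List ℕ) :=
  {u : List ℕ | ∃ m, α m = Nat.pair n (Encodable.encode u)}

/-- `{α}(n)↓` : the partial function coded by `α` is defined at `n`. -/
def Defined (α : ℕ → ℕ) (n : ℕ) : Prop :=
  ∃! β : ℕ → ℕ, ∀ u : List ℕ, IsInitSeg β u ↔ u ∈ codeSet α n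

/-!
A set `S` of finite sequences is the set of initial segments of a unique `β ∈ 𝒩` exactly when
`S` is a chain under the prefix order and contains a sequence of every length. Membership
`u ∈ codeSet α n` is open in `(α, n)`, being witnessed by a single value of `α`; hence
"`codeSet α n` contains a sequence of length `k`" is open for each `k`, while "`codeSet α n` is a
chain" is closed, since it fails only when two incomparable sequences are both enumerated.
A closed subset of the metrizable space `𝒩 × ℕ` is a Gδ.
-/

namespace IsInitSeg

variable {β : ℕ → ℕ} {u v : List ℕ}

lemma getElem_eq (h : IsInitSeg β u) {i : ℕ} (hi : i < u.length) : u[i] = β i :=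
  (h i hi).symm

lemma isPrefix_of_length_le (hu : IsInitSeg β u) (hv : IsInitSeg β v)
    (h : u.length ≤ v.length) : u <+: v := by
  rw [List.prefix_iff_eq_take]
  refine List.ext_getElem (by simp [h]) fun i hi _ => ?_
  simp [hu.getElem_eq hi, hv.getElem_eq (hi.trans_le h)]

lemma eq_of_length_eq (hu : IsInitSeg β u) (hv : IsInitSeg β v) (h : u.length = v.length) :
    u = v :=
  (hu.isPrefix_of_length_le hv h.le).eq_of_length h

end IsInitSeg

lemma isInitSeg_ofFn (β : ℕ → ℕ) (k : ℕ) : IsInitSeg β (List.ofFn fun i : Fin k => β i) := by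
  intro i h
  simp

lemma getElem_eq_of_isChain_prefix {S : Set (List ℕ)} (hS : IsChain (· <+: ·) S) {u v : List ℕ}
    (hu : u ∈ S) (hv : v ∈ S) {i : ℕ} (hiu : i < u.length) (hiv : i < v.length) :
    u[i] = v[i] := by
  obtain rfl | hne := eq_or_ne u v
  · rfl
  rcases hS hu hv hne with h | h
  · exact h.getElem hiu
  · exact (h.getElem hiv).symm

theorem existsUnique_isInitSeg_iff (S : Set (List ℕ)) :
    (∃! β : ℕ → ℕ, ∀ u, IsInitSeg β u ↔ u ∈ S) ↔
      (∀ k, ∃ u ∈ S, u.length = k) ∧ IsChain (· <+: ·) S := by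
  constructor
  · rintro ⟨β, hβ, -⟩
    refine ⟨fun k => ⟨_, (hβ _).1 (isInitSeg_ofFn β k), List.length_ofFn⟩, ?_⟩
    intro u hu v hv _
    have hu := (hβ u).2 hu
    have hv := (hβ v).2 hv
    exact (le_total u.length v.length).imp (hu.isPrefix_of_length_le hv)
      (hv.isPrefix_of_length_le hu)
  · rintro ⟨hlen, hS⟩
    choose w hwS hwlen using hlen
    have hi : ∀ i, i < (w (i + 1)).length := fun i => by simp [hwlen]
    set β : ℕ → ℕ := fun i => (w (i + 1))[i]'(hi i)
    have hseg : ∀ u ∈ S, IsInitSeg β u := fun u hu i h =>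
      getElem_eq_of_isChain_prefix hS (hwS _) hu (hi i) h
    refine ⟨β, fun u => ⟨fun hu => ?_, hseg u⟩, fun γ hγ => funext fun i => ?_⟩
    · rw [hu.eq_of_length_eq (hseg _ (hwS u.length)) (hwlen _).symm]
      exact hwS _
    · exact (hγ _).2 (hwS (i + 1)) i (hi i)

lemma isOpen_setOf_mem_codeSet (u : List ℕ) :
    IsOpen {p : (ℕ → ℕ) × ℕ | u ∈ codeSet p.1 p.2} := by
  change IsOpen {p : (ℕ → ℕ) × ℕ | ∃ m, p.1 m = Nat.pair p.2 (Encodable.encode u)}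
  rw [ofPred_exists]
  exact isOpen_iUnion fun m =>
    (isOpen_discrete {q : ℕ × ℕ | q.1 = Nat.pair q.2 (Encodable.encode u)}).preimage
      (by fun_prop : Continuous fun p : (ℕ → ℕ) × ℕ => (p.1 m, p.2))

lemma isClosed_setOf_isChain {X ι : Type*} [TopologicalSpace X] (r : ι → ι → Prop)
    {U : ι → Set X} (hU : ∀ i, IsOpen (U i)) : IsClosed {x | IsChain r {i | x ∈ U i}} := by
  have h : {x | IsChain r {i | x ∈ U i}} =
      ⋂ i, ⋂ j, (U i ∩ U j)ᶜ ∪ {_x | i ≠ j → r i j ∨ r j i} := by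
    ext x
    simp only [IsChain, Set.Pairwise, mem_ofPred_eq, ne_eq, or_iff_not_imp_left, mem_iInter,
      mem_union, mem_compl_iff, mem_inter_iff, not_and, Classical.not_imp, not_not, and_imp]
    exact ⟨fun h i j hi hj => h hi hj, fun h i hi j hj => h i j hi hj⟩
  rw [h]
  exact isClosed_iInter fun i => isClosed_iInter fun j =>
    ((hU i).inter (hU j)).isClosed_compl.union isClosed_const

theorem dom_isGδ :
    IsGδ {p : (ℕ → ℕ) × ℕ | Defined p.1 p.2} := by
  let U (u : List ℕ) : Set ((ℕ → ℕ) × ℕ) := {p | u ∈ codeSet p.1 p.2}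
  have hDom : {p : (ℕ → ℕ) × ℕ | Defined p.1 p.2} =
      (⋂ k, ⋃ u ∈ {u : List ℕ | u.length = k}, U u) ∩ {p | IsChain (· <+: ·) {u | p ∈ U u}} := by
    ext p
    simp [U, Defined, existsUnique_isInitSeg_iff, and_comm]
  rw [hDom]
  exact (IsGδ.iInter fun k => (isOpen_biUnion fun u _ => isOpen_setOf_mem_codeSet u).isGδ).inter
    (isClosed_setOf_isChain _ isOpen_setOf_mem_codeSet).isGδ
end

section
/- Uniformly approximating closed sets by open sets in the codes: let X be a Polish space and b : ℕ → Set X a basic open enumeration of X. There exists a function apc : 𝒩 → 𝒩 such that (i) apc is Σ⁰₂-measurable, i.e. for every open V ⊆ 𝒩 the preimage apc⁻¹(V) is an Fσ set (a countable union of closed subsets of 𝒩); and (ii) for every α ∈ 𝒩 the symmetric difference (X \ U_b(α)) Δ U_b(apc α) is meager in X. -/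
/-!
For an open set `U = U_b(α)` the closed set `Uᶜ` differs from its interior only by the
frontier of `Uᶜ`, which is closed with empty interior, hence meagre. The interior of `Uᶜ`
is coded uniformly by keeping the index `n` when `b n` misses `U` and replacing it by a
code of `∅` otherwise. Whether `b n` misses `U` is a closed condition on `α`, so every
coordinate of this code map has Fσ fibres, and then so has the preimage of every cylinder
and of every open set.
-/

open Set Topology TopologicalSpace
open scoped symmDiff

section IsFσ

variable {Y : Type*} [TopologicalSpace Y]

def IsFσ (s : Set Y) : Prop :=
  ∃ F : ℕ → Set Y, (∀ n, IsClosed (F n)) ∧ s = ⋃ n, F n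

theorem isGδ_compl_iff_isFσ {s : Set Y} : IsGδ sᶜ ↔ IsFσ s := by
  rw [isGδ_iff_eq_iInter_nat]
  constructor
  · rintro ⟨f, hf, hs⟩
    exact ⟨fun n => (f n)ᶜ, fun n => (hf n).isClosed_compl, by rw [← compl_iInter, ← hs, compl_compl]⟩
  · rintro ⟨F, hF, rfl⟩
    exact ⟨fun n => (F n)ᶜ, fun n => (hF n).isOpen_compl, compl_iUnion F⟩

theorem IsFσ.isGδ_compl {s : Set Y} (h : IsFσ s) : IsGδ sᶜ := isGδ_compl_iff_isFσ.2 h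

theorem IsGδ.isFσ_compl {s : Set Y} (h : IsGδ s) : IsFσ sᶜ :=
  isGδ_compl_iff_isFσ.1 (by rwa [compl_compl])

theorem IsClosed.isFσ {s : Set Y} (h : IsClosed s) : IsFσ s :=
  isGδ_compl_iff_isFσ.1 h.isOpen_compl.isGδ

theorem IsOpen.isFσ [PerfectlyNormalSpace Y] {s : Set Y} (h : IsOpen s) : IsFσ s := by
  simpa using h.isClosed_compl.isGδ.isFσ_compl

theorem IsFσ.union {s t : Set Y} (hs : IsFσ s) (ht : IsFσ t) : IsFσ (s ∪ t) := by
  simpa only [compl_inter, compl_compl] using (hs.isGδ_compl.inter ht.isGδ_compl).isFσ_compl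

theorem IsFσ.inter {s t : Set Y} (hs : IsFσ s) (ht : IsFσ t) : IsFσ (s ∩ t) := by
  simpa [compl_inter] using (hs.isGδ_compl.union ht.isGδ_compl).isFσ_compl

theorem IsFσ.biUnion {ι : Type*} {I : Set ι} (hI : I.Countable) {s : ι → Set Y}
    (hs : ∀ i ∈ I, IsFσ (s i)) : IsFσ (⋃ i ∈ I, s i) := by
  simpa using (IsGδ.biInter hI fun i hi => (hs i hi).isGδ_compl).isFσ_compl

theorem IsFσ.biInter_finset {ι : Type*} (I : Finset ι) {s : ι → Set Y}
    (hs : ∀ i ∈ I, IsFσ (s i)) : IsFσ (⋂ i ∈ I, s i) := by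
  simpa using (IsGδ.biUnion I.finite_toSet fun i hi => (hs i hi).isGδ_compl).isFσ_compl

theorem isFσ_setOf_ite_eq [PerfectlyNormalSpace Y] {β : Type*} {p : Y → Prop} [DecidablePred p]
    (hp : IsClosed {y | p y}) (a c k : β) : IsFσ {y | (if p y then a else c) = k} := by
  have hsplit : {y | (if p y then a else c) = k} =
      ({y | p y} ∩ {_y | a = k}) ∪ ({y | p y}ᶜ ∩ {_y | c = k}) := by
    ext y
    by_cases hy : p y <;> simp [hy]
  rw [hsplit]
  exact (hp.isFσ.inter isClosed_const.isFσ).union (hp.isOpen_compl.isFσ.inter isClosed_const.isFσ)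

end IsFσ

/-- An open set is a countable union of cylinders, and the preimage of a cylinder is a finite
intersection of coordinate fibres. -/
theorem isFσ_preimage_of_isOpen {Y : Type*} [TopologicalSpace Y] {E : ℕ → Type*}
    [∀ n, TopologicalSpace (E n)] [∀ n, DiscreteTopology (E n)] [∀ n, Countable (E n)]
    {f : Y → ∀ n, E n} (hf : ∀ i k, IsFσ {y | f y i = k}) {V : Set (∀ n, E n)}
    (hV : IsOpen V) : IsFσ (f ⁻¹' V) := by
  have hB := PiNat.isTopologicalBasis_cylinders E
  obtain ⟨T, hT, hTS, hTV⟩ := isOpen_sUnion_countable {s | s ∈ _ ∧ s ⊆ V} fun s hs =>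
    hB.isOpen hs.1
  rw [hB.open_eq_sUnion' hV, ← hTV, sUnion_eq_biUnion, preimage_iUnion₂]
  refine IsFσ.biUnion hT fun t ht => ?_
  obtain ⟨⟨x, n, rfl⟩, -⟩ := hTS ht
  have hcyl : f ⁻¹' PiNat.cylinder x n = ⋂ i ∈ Finset.range n, {y | f y i = x i} := by
    ext y
    simp [PiNat.mem_cylinder_iff]
  rw [hcyl]
  exact IsFσ.biInter_finset _ fun i _ => hf i (x i)

theorem IsClosed.isMeagre_symmDiff_interior {X : Type*} [TopologicalSpace X] {C : Set X}
    (hC : IsClosed C) : IsMeagre (C ∆ interior C) := by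
  rw [symmDiff_of_ge interior_subset, ← hC.frontier_eq]
  exact (isClosed_frontier.isNowhereDense_iff.2 (interior_frontier hC)).isMeagre

section Codes

variable {X : Type*} (b : ℕ → Set X)

def codedOpen (α : ℕ → ℕ) : Set X := ⋃ n, b (α n)

open Classical in
noncomputable def interiorComplCode (e : ℕ) (α : ℕ → ℕ) : ℕ → ℕ :=
  fun n => if Disjoint (b n) (codedOpen b α) then n else e

theorem isClosed_setOf_disjoint_codedOpen (s : Set X) :
    IsClosed {α : ℕ → ℕ | Disjoint s (codedOpen b α)} := by
  have h : {α : ℕ → ℕ | Disjoint s (codedOpen b α)} =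
      ⋂ m, (fun α : ℕ → ℕ => α m) ⁻¹' {k | Disjoint s (b k)} := by
    ext α
    simp [codedOpen]
  rw [h]
  exact isClosed_iInter fun m => (isClosed_discrete _).preimage (continuous_apply m)

open Classical in
theorem isFσ_preimage_interiorComplCode (e : ℕ) {V : Set (ℕ → ℕ)} (hV : IsOpen V) :
    IsFσ (interiorComplCode b e ⁻¹' V) :=
  isFσ_preimage_of_isOpen (fun n _ => isFσ_setOf_ite_eq
    (isClosed_setOf_disjoint_codedOpen b (b n)) n e _) hV

variable [TopologicalSpace X] {b}

theorem codedOpen_interiorComplCode (hbasis : IsTopologicalBasis (range b)) {e : ℕ}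
    (he : b e = ∅) (α : ℕ → ℕ) :
    codedOpen b (interiorComplCode b e α) = interior (codedOpen b α)ᶜ := by
  apply Subset.antisymm
  · refine iUnion_subset fun n => ?_
    unfold interiorComplCode
    split_ifs with hn
    · exact interior_maximal hn.subset_compl_right (hbasis.isOpen (mem_range_self n))
    · simp [he]
  · intro x hx
    obtain ⟨t, ⟨n, rfl⟩, hxn, hn⟩ := hbasis.exists_subset_of_mem_open hx isOpen_interior
    have hdisj : Disjoint (b n) (codedOpen b α) :=
      subset_compl_iff_disjoint_right.1 (hn.trans interior_subset)
    exact mem_iUnion.2 ⟨n, by simpa [interiorComplCode, hdisj] using hxn⟩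

end Codes

theorem approx_closed_by_open_in_codes_general
    {X : Type*} [TopologicalSpace X]
    (b : ℕ → Set X)
    (hbasis : TopologicalSpace.IsTopologicalBasis (Set.range b))
    (hempty : (∅ : Set X) ∈ Set.range b) :
    ∃ apc : (ℕ → ℕ) → (ℕ → ℕ),
      (∀ V : Set (ℕ → ℕ), IsOpen V →
        ∃ F : ℕ → Set (ℕ → ℕ), (∀ n, IsClosed (F n)) ∧ apc ⁻¹' V = ⋃ n, F n) ∧
      ∀ α : ℕ → ℕ, IsMeagre ((⋃ n, b (α n))ᶜ ∆ (⋃ n, b (apc α n))) := by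
  obtain ⟨e, he⟩ := hempty
  refine ⟨interiorComplCode b e, fun V hV => isFσ_preimage_interiorComplCode b e hV, fun α => ?_⟩
  have hU : IsOpen (codedOpen b α) := isOpen_iUnion fun n => hbasis.isOpen (mem_range_self _)
  change IsMeagre ((codedOpen b α)ᶜ ∆ codedOpen b (interiorComplCode b e α))
  rw [codedOpen_interiorComplCode hbasis he]
  exact hU.isClosed_compl.isMeagre_symmDiff_interior

theorem approx_closed_by_open_in_codes
    {X : Type*} [TopologicalSpace X] [PolishSpace X]
    (b : ℕ → Set X)
    (hopen : ∀ s, IsOpen (b s))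
    (hbasis : TopologicalSpace.IsTopologicalBasis (Set.range b))
    (hempty : (∅ : Set X) ∈ Set.range b) :
    ∃ apc : (ℕ → ℕ) → (ℕ → ℕ),
      (∀ V : Set (ℕ → ℕ), IsOpen V →
        ∃ F : ℕ → Set (ℕ → ℕ), (∀ n, IsClosed (F n)) ∧ apc ⁻¹' V = ⋃ n, F n) ∧
      ∀ α : ℕ → ℕ, IsMeagre ((⋃ n, b (α n))ᶜ ∆ (⋃ n, b (apc α n))) :=
  approx_closed_by_open_in_codes_general b hbasis hempty
end

section
/- Uniformly approximating Fσ sets by open sets in the codes (the level-two case of the transition from Borel codes to open codes): let X be a Polish space and b : ℕ → Set X a basic open enumeration of X. There exists a function c : 𝒩 → 𝒩 such that (i) c is Σ⁰₂-measurable, i.e. for every open V ⊆ 𝒩 the preimage c⁻¹(V) is an Fσ set (a countable union of closed subsets of 𝒩); and (ii) for every α ∈ 𝒩 the symmetric difference (⋃ n, (X \ U_b((α)ₙ))) Δ U_b(c α) is meager in X, where (α)ₙ := (t ↦ α ⟨n, t⟩) and ⟨·,·⟩ is the pairing Nat.pair. (Here α codes the Fσ set ⋃ n, (X \ U_b((α)ₙ)).)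 -/
/-! Write `U n = ⋃ m, b (α ⟨n, m⟩)`. The code `c α` sends `⟨n, s⟩` to `s` when `b s` misses
`U n` and to a code of `∅` otherwise, so it codes `⋃ n, interior (U n)ᶜ`; a closed set differs from
its interior by a nowhere dense set, which gives the meagre symmetric difference. Whether `b s`
misses `U n` is a closed condition on `α`, so every coordinate of `c` takes each value on an Fσ
set, and preimages of cylinders, hence of open sets, are Fσ. -/

open Set
open scoped symmDiff

open Topology TopologicalSpace PiNat Filter

section Measurability

variable {A : Type*} [TopologicalSpace A]

theorem TopologicalSpace.IsTopologicalBasis.isGδ_compl_preimage {B : Type*} [TopologicalSpace B]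
    [SecondCountableTopology B] {𝓑 : Set (Set B)} (h𝓑 : IsTopologicalBasis 𝓑) {f : A → B}
    (hf : ∀ u ∈ 𝓑, IsGδ (f ⁻¹' u)ᶜ) {V : Set B} (hV : IsOpen V) : IsGδ (f ⁻¹' V)ᶜ := by
  obtain ⟨T, hTc, hT𝓑, hTV⟩ :=
    isOpen_sUnion_countable {u ∈ 𝓑 | u ⊆ V} fun u hu => h𝓑.isOpen hu.1
  rw [← h𝓑.open_eq_sUnion' hV] at hTV
  rw [← hTV, preimage_sUnion, compl_iUnion₂]
  exact .biInter hTc fun u hu => hf u (hT𝓑 hu).1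

theorem isGδ_compl_preimage_of_isGδ_setOf_apply_ne {E : ℕ → Type*}
    [∀ n, TopologicalSpace (E n)] [∀ n, DiscreteTopology (E n)]
    [∀ n, SecondCountableTopology (E n)] {f : A → ∀ n, E n}
    (hf : ∀ i (v : E i), IsGδ {a | f a i ≠ v}) {V : Set (∀ n, E n)} (hV : IsOpen V) :
    IsGδ (f ⁻¹' V)ᶜ := by
  refine (isTopologicalBasis_cylinders E).isGδ_compl_preimage (fun u hu => ?_) hV
  obtain ⟨x, n, rfl⟩ := hu
  have hcyl : (f ⁻¹' cylinder x n)ᶜ = ⋃ i ∈ Finset.range n, {a | f a i ≠ x i} := by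
    ext a
    simp [cylinder]
  rw [hcyl]
  exact .biUnion (Finset.finite_toSet _) fun i _ => hf i (x i)

theorem isGδ_setOf_ite_ne [PerfectlyNormalSpace A] {p : A → Prop} [DecidablePred p]
    (hp : IsClosed {x | p x}) {β : Type*} (a₁ a₂ v : β) :
    IsGδ {x | (if p x then a₁ else a₂) ≠ v} := by
  have hset : {x | (if p x then a₁ else a₂) ≠ v} =
      ({x | p x} ∩ {_x | a₁ ≠ v}) ∪ ({x | p x}ᶜ ∩ {_x | a₂ ≠ v}) := by
    ext x
    by_cases hx : p x <;> simp [hx]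
  rw [hset]
  by_cases ha : a₁ = v <;> by_cases hb : a₂ = v <;> simp only [ha, hb, ne_eq, not_true_eq_false,
    not_false_eq_true, ofPred_false, ofPred_true, inter_empty, inter_univ, union_empty, empty_union]
  exacts [.empty, hp.isOpen_compl.isGδ, hp.isGδ, hp.isGδ.union hp.isOpen_compl.isGδ]

end Measurability

theorem IsClosed.interior_residualEq {X : Type*} [TopologicalSpace X] {F : Set X}
    (hF : IsClosed F) : interior F =ᵇ F := by
  simpa [closure_compl] using (closure_residualEq hF.isOpen_compl.isLocallyClosed).compl

theorem Filter.EventuallyEq.isMeagre_symmDiff {X : Type*} [TopologicalSpace X] {s t : Set X}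
    (h : s =ᵇ t) : IsMeagre (s ∆ t) := by
  refine mem_of_superset (eventuallyEq_set.1 h) fun x hx => ?_
  simp_all

section Codes

variable {X : Type*} (b : ℕ → Set X)

open Classical in
noncomputable def interiorCode (e : ℕ) (α : ℕ → ℕ) (k : ℕ) : ℕ :=
  if Disjoint (b k.unpair.2) (⋃ m, b (α (Nat.pair k.unpair.1 m))) then k.unpair.2 else e

theorem isClosed_setOf_disjoint_iUnion (s n : ℕ) :
    IsClosed {α : ℕ → ℕ | Disjoint (b s) (⋃ m, b (α (Nat.pair n m)))} := by
  simp_rw [disjoint_iUnion_right, ofPred_forall]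
  exact isClosed_iInter fun m =>
    (isClosed_discrete {t | Disjoint (b s) (b t)}).preimage
      (f := fun α : ℕ → ℕ => α (Nat.pair n m)) (continuous_apply _)

open Classical in
theorem isGδ_compl_preimage_interiorCode (e : ℕ) {V : Set (ℕ → ℕ)} (hV : IsOpen V) :
    IsGδ (interiorCode b e ⁻¹' V)ᶜ :=
  isGδ_compl_preimage_of_isGδ_setOf_apply_ne
    (fun _ v => isGδ_setOf_ite_ne (isClosed_setOf_disjoint_iUnion b _ _) _ _ v) hV

theorem iUnion_interiorCode [TopologicalSpace X] (hbasis : IsTopologicalBasis (range b))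
    {e : ℕ} (he : b e = ∅) (α : ℕ → ℕ) :
    ⋃ k, b (interiorCode b e α k) = ⋃ n, interior (⋃ m, b (α (Nat.pair n m)))ᶜ := by
  refine Subset.antisymm (iUnion_subset fun k => ?_) (iUnion_subset fun n x hx => ?_)
  · unfold interiorCode
    split_ifs with hdisj
    · exact subset_iUnion_of_subset _ <| interior_maximal
        (subset_compl_iff_disjoint_right.2 hdisj) (hbasis.isOpen (mem_range_self _))
    · simp [he]
  · obtain ⟨_, ⟨s, rfl⟩, hxs, hs⟩ := hbasis.exists_subset_of_mem_open hx isOpen_interior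
    have hdisj : Disjoint (b s) (⋃ m, b (α (Nat.pair n m))) :=
      subset_compl_iff_disjoint_right.1 (hs.trans interior_subset)
    refine mem_iUnion.2 ⟨Nat.pair n s, ?_⟩
    simpa [interiorCode, hdisj] using hxs

end Codes

theorem approx_Fsigma_by_open_in_codes_general
    {X : Type*} [TopologicalSpace X]
    (b : ℕ → Set X)
    (hbasis : TopologicalSpace.IsTopologicalBasis (Set.range b))
    (hempty : (∅ : Set X) ∈ Set.range b) :
    ∃ c : (ℕ → ℕ) → (ℕ → ℕ),
      (∀ V : Set (ℕ → ℕ), IsOpen V →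
        ∃ F : ℕ → Set (ℕ → ℕ), (∀ n, IsClosed (F n)) ∧ c ⁻¹' V = ⋃ n, F n) ∧
      ∀ α : ℕ → ℕ,
        IsMeagre ((⋃ n, (⋃ m, b (α (Nat.pair n m)))ᶜ) ∆ (⋃ n, b (c α n))) := by
  obtain ⟨e, he⟩ := hempty
  refine ⟨interiorCode b e, fun V hV => ?_, fun α => ?_⟩
  · obtain ⟨G, hG, hGeq⟩ := isGδ_iff_eq_iInter_nat.1 (isGδ_compl_preimage_interiorCode b e hV)
    refine ⟨fun n => (G n)ᶜ, fun n => (hG n).isClosed_compl, ?_⟩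
    rw [← compl_iInter, ← hGeq, compl_compl]
  · rw [iUnion_interiorCode b hbasis he]
    refine EventuallyEq.isMeagre_symmDiff (Filter.EventuallyEq.countable_iUnion fun n => ?_).symm
    exact (isOpen_iUnion fun m => hbasis.isOpen (mem_range_self _)).isClosed_compl
      |>.interior_residualEq

theorem approx_Fsigma_by_open_in_codes
    {X : Type*} [TopologicalSpace X] [PolishSpace X]
    (b : ℕ → Set X)
    (hopen : ∀ s, IsOpen (b s))
    (hbasis : TopologicalSpace.IsTopologicalBasis (Set.range b))
    (hempty : (∅ : Set X) ∈ Set.range b) :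
    ∃ c : (ℕ → ℕ) → (ℕ → ℕ),
      (∀ V : Set (ℕ → ℕ), IsOpen V →
        ∃ F : ℕ → Set (ℕ → ℕ), (∀ n, IsClosed (F n)) ∧ c ⁻¹' V = ⋃ n, F n) ∧
      ∀ α : ℕ → ℕ,
        IsMeagre ((⋃ n, (⋃ m, b (α (Nat.pair n m)))ᶜ) ∆ (⋃ n, b (c α n))) :=
  approx_Fsigma_by_open_in_codes_general b hbasis hempty
end

section
/- Kleene's fixed point theorem for good universal systems of analytic sets: let X be a Polish space, G ⊆ 𝒩 × X, and G₂ ⊆ 𝒩 × (𝒩 × X) an analytic set such that (a) G₂ parametrizes the analytic subsets of 𝒩 × X, i.e. for every analytic A ⊆ 𝒩 × X there exists ε ∈ 𝒩 with A = {(α, x) | (ε, (α, x)) ∈ G₂}; and (b) there is a continuous S : 𝒩 × 𝒩 → 𝒩 such that for all ε, α ∈ 𝒩 and x ∈ X, (ε, (α, x)) ∈ G₂ if and only if (S(ε, α), x) ∈ G. Then for every analytic set A ⊆ 𝒩 × X there exists ε₀ ∈ 𝒩 such that for all x ∈ X, (ε₀, x) ∈ A if and only if (ε₀, x) ∈ G.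 -/
/-! The diagonal argument of the recursion theorem: pull `A` back along `(α, x) ↦ (S (α, α), x)`,
pick a code `ε` of the (still analytic) pullback, and `ε₀ = S (ε, ε)` is the fixed point. -/

open Set MeasureTheory

def selfApply {P X : Type*} (S : P × P → P) (p : P × X) : P × X :=
  (S (p.1, p.1), p.2)

theorem continuous_selfApply {P X : Type*} [TopologicalSpace P] [TopologicalSpace X]
    {S : P × P → P} (hS : Continuous S) : Continuous (selfApply (X := X) S) :=
  (hS.comp (continuous_fst.prodMk continuous_fst)).prodMk continuous_snd

theorem selfApply_code_mem_iff {P X : Type*} {G : Set (P × X)} {G₂ : Set (P × (P × X))}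
    {S : P × P → P} (hS : ∀ ε α x, (ε, (α, x)) ∈ G₂ ↔ (S (ε, α), x) ∈ G)
    {A : Set (P × X)} {ε : P} (hε : selfApply S ⁻¹' A = {p | (ε, p) ∈ G₂}) (x : X) :
    (S (ε, ε), x) ∈ A ↔ (S (ε, ε), x) ∈ G :=
  (Set.ext_iff.1 hε (ε, x)).trans (hS ε ε x)

theorem kleene_fixed_point_analytic_general
    {X : Type*} [TopologicalSpace X] [PolishSpace X]
    (G : Set ((ℕ → ℕ) × X))
    (G₂ : Set ((ℕ → ℕ) × ((ℕ → ℕ) × X)))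
    (hparam : ∀ A : Set ((ℕ → ℕ) × X), AnalyticSet A →
      ∃ ε : ℕ → ℕ, A = {p : (ℕ → ℕ) × X | (ε, p) ∈ G₂})
    (hgood : ∃ S : (ℕ → ℕ) × (ℕ → ℕ) → (ℕ → ℕ), Continuous S ∧
      ∀ (ε α : ℕ → ℕ) (x : X), (ε, (α, x)) ∈ G₂ ↔ (S (ε, α), x) ∈ G) :
    ∀ A : Set ((ℕ → ℕ) × X), AnalyticSet A →
      ∃ ε₀ : ℕ → ℕ, ∀ x : X, (ε₀, x) ∈ A ↔ (ε₀, x) ∈ G := by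
  obtain ⟨S, hScont, hS⟩ := hgood
  intro A hA
  obtain ⟨ε, hε⟩ := hparam _ (hA.preimage (continuous_selfApply hScont))
  exact ⟨S (ε, ε), selfApply_code_mem_iff hS hε⟩

theorem kleene_fixed_point_analytic
    {X : Type*} [TopologicalSpace X] [PolishSpace X]
    (G : Set ((ℕ → ℕ) × X))
    (G₂ : Set ((ℕ → ℕ) × ((ℕ → ℕ) × X)))
    (hG₂ : AnalyticSet G₂)
    (hparam : ∀ A : Set ((ℕ → ℕ) × X), AnalyticSet A →
      ∃ ε : ℕ → ℕ, A = {p : (ℕ → ℕ) × X | (ε, p) ∈ G₂})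
    (hgood : ∃ S : (ℕ → ℕ) × (ℕ → ℕ) → (ℕ → ℕ), Continuous S ∧
      ∀ (ε α : ℕ → ℕ) (x : X), (ε, (α, x)) ∈ G₂ ↔ (S (ε, α), x) ∈ G) :
    ∀ A : Set ((ℕ → ℕ) × X), AnalyticSet A →
      ∃ ε₀ : ℕ → ℕ, ∀ x : X, (ε₀, x) ∈ A ↔ (ε₀, x) ∈ G :=
  kleene_fixed_point_analytic_general G G₂ hparam hgood
end

section
/- Let P ⊆ ℕ, let V := {x ∈ 𝒩 | x 0 ∈ P}, and let W ⊆ 𝒩 be an open set such that the symmetric difference V Δ W is meager. Then for every n ∈ ℕ: n ∈ P if and only if the set {x ∈ 𝒩 | x 0 = n} ∩ W is nonempty. -/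
open Set
open scoped symmDiff

theorem nonempty_inter_of_isMeagre_symmDiff {X : Type*} [TopologicalSpace X] [BaireSpace X]
    {U V W : Set X} (hU : IsOpen U) (hne : U.Nonempty) (hUV : U ⊆ V) (h : IsMeagre (V ∆ W)) :
    (U ∩ W).Nonempty := by
  by_contra hUW
  have hsub : U ⊆ V ∆ W := fun x hx ↦
    Or.inl ⟨hUV hx, fun hxW ↦ hUW ⟨x, hx, hxW⟩⟩
  exact not_isMeagre_of_isOpen hU hne (h.mono hsub)

theorem mem_iff_section_inter_nonempty
    (P : Set ℕ) (W : Set (ℕ → ℕ)) (hW : IsOpen W)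
    (hmeager : IsMeagre ({x : ℕ → ℕ | x 0 ∈ P} ∆ W)) :
    ∀ n : ℕ, n ∈ P ↔ ({x : ℕ → ℕ | x 0 = n} ∩ W).Nonempty := by
  intro n
  have hsection : IsOpen {x : ℕ → ℕ | x 0 = n} :=
    (isOpen_discrete {n}).preimage (continuous_apply (A := fun _ ↦ ℕ) 0)
  constructor
  · intro hn
    refine nonempty_inter_of_isMeagre_symmDiff hsection ⟨fun _ ↦ n, rfl⟩ ?_ hmeager
    rintro x (hx : x 0 = n)
    simpa [hx] using hn
  · intro hne
    obtain ⟨x, ⟨hx, -⟩, hxP⟩ := nonempty_inter_of_isMeagre_symmDiff (hsection.inter hW) hne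
      inter_subset_right (symmDiff_comm _ W ▸ hmeager)
    exact hx ▸ hxP
end

section
/- No Borel-measurable function can witness the Baire property of analytic sets for all codes: let b : ℕ → Set 𝒩 be a basic open enumeration of 𝒩, let G ⊆ 𝒩 × 𝒩 be analytic, and let G₂ ⊆ 𝒩 × (𝒩 × 𝒩) be an analytic set such that (a) for every analytic A ⊆ 𝒩 × 𝒩 there exists ε ∈ 𝒩 with A = {(α, x) | (ε, (α, x)) ∈ G₂}, and (b) there is a continuous S : 𝒩 × 𝒩 → 𝒩 such that for all ε, α, x ∈ 𝒩, (ε, (α, x)) ∈ G₂ if and only if (S(ε, α), x) ∈ G. Then for every Borel-measurable function f : 𝒩 → 𝒩 there exists α ∈ 𝒩 such that the symmetric difference G_α Δ U_b(f α) is not meager. -/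
open Set MeasureTheory
open scoped symmDiff

/-!
Diagonalise against `f`. The set `{(α, x) | x ∉ U_b(f (S (α, α)))}` is Borel, hence analytic, so it
has a code `ε`. At `α := S (ε, ε)` the universality of `G₂` and the equivalence with `G` give
`G_α = (U_b(f α))ᶜ`, so `G_α Δ U_b(f α)` is the whole space, which is not meagre by Baire's theorem.
-/

theorem measurableSet_setOf_mem_iUnion_comp {X Y ι κ : Type*} [MeasurableSpace X]
    [MeasurableSpace Y] [MeasurableSpace κ] [MeasurableSingletonClass κ] [Countable ι]
    [Countable κ] {b : κ → Set Y} (hb : ∀ k, MeasurableSet (b k)) {g : X → ι → κ}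
    (hg : Measurable g) :
    MeasurableSet {p : X × Y | p.2 ∈ ⋃ n, b (g p.1 n)} := by
  have hdecomp : {p : X × Y | p.2 ∈ ⋃ n, b (g p.1 n)} =
      ⋃ n, ⋃ k, {x | g x n = k} ×ˢ b k := by
    ext p
    simp only [mem_ofPred_eq, mem_iUnion, mem_prod]
    exact ⟨fun ⟨n, hn⟩ => ⟨n, _, rfl, hn⟩, fun ⟨n, k, hk, hb⟩ => ⟨n, hk ▸ hb⟩⟩
  rw [hdecomp]
  exact .iUnion fun n => .iUnion fun k =>
    ((measurable_pi_apply n).comp hg (measurableSet_singleton k)).prod (hb k)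

theorem exists_section_eq_of_universal {X Y : Type*} [TopologicalSpace X] [TopologicalSpace Y]
    {G : Set (X × Y)} {G₂ : Set (X × (X × Y))}
    (hparam : ∀ A : Set (X × Y), AnalyticSet A → ∃ ε : X, A = {p : X × Y | (ε, p) ∈ G₂})
    {S : X × X → X} (hSG : ∀ ε α y, (ε, (α, y)) ∈ G₂ ↔ (S (ε, α), y) ∈ G)
    {V : X → Set Y} (hV : AnalyticSet {p : X × Y | p.2 ∈ V (S (p.1, p.1))}) :
    ∃ α, {y | (α, y) ∈ G} = V α := by
  obtain ⟨ε, hε⟩ := hparam _ hV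
  refine ⟨S (ε, ε), Set.ext fun y => ?_⟩
  have hcode : y ∈ V (S (ε, ε)) ↔ (ε, (ε, y)) ∈ G₂ := Set.ext_iff.mp hε (ε, y)
  exact (hSG ε ε y).symm.trans hcode.symm

theorem no_borel_witness_baire_property_analytic_general
    (b : ℕ → Set (ℕ → ℕ))
    (hopen : ∀ s, IsOpen (b s))
    (G : Set ((ℕ → ℕ) × (ℕ → ℕ)))
    (G₂ : Set ((ℕ → ℕ) × ((ℕ → ℕ) × (ℕ → ℕ))))
    (hparam : ∀ A : Set ((ℕ → ℕ) × (ℕ → ℕ)), AnalyticSet A →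
      ∃ ε : ℕ → ℕ, A = {p : (ℕ → ℕ) × (ℕ → ℕ) | (ε, p) ∈ G₂})
    (hgood : ∃ S : (ℕ → ℕ) × (ℕ → ℕ) → (ℕ → ℕ), Continuous S ∧
      ∀ ε α x : ℕ → ℕ, (ε, (α, x)) ∈ G₂ ↔ (S (ε, α), x) ∈ G)
    (f : (ℕ → ℕ) → (ℕ → ℕ)) (hf : Measurable f) :
    ∃ α : ℕ → ℕ, ¬ IsMeagre ({x : ℕ → ℕ | (α, x) ∈ G} ∆ (⋃ n, b (f α n))) := by
  obtain ⟨S, hS, hSG⟩ := hgood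
  have hdiag : MeasurableSet {p : (ℕ → ℕ) × (ℕ → ℕ) | p.2 ∈ (⋃ n, b (f (S (p.1, p.1)) n))ᶜ} :=
    (measurableSet_setOf_mem_iUnion_comp (fun k => (hopen k).measurableSet)
      (hf.comp (hS.measurable.comp (measurable_id.prodMk measurable_id)))).compl
  obtain ⟨α, hα⟩ := exists_section_eq_of_universal hparam hSG
    (V := fun α => (⋃ n, b (f α n))ᶜ) hdiag.analyticSet
  refine ⟨α, ?_⟩
  rw [hα, compl_symmDiff_self]
  exact not_isMeagre_of_isOpen isOpen_univ univ_nonempty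

theorem no_borel_witness_baire_property_analytic
    (b : ℕ → Set (ℕ → ℕ))
    (hopen : ∀ s, IsOpen (b s))
    (hbasis : TopologicalSpace.IsTopologicalBasis (Set.range b))
    (hempty : (∅ : Set (ℕ → ℕ)) ∈ Set.range b)
    (G : Set ((ℕ → ℕ) × (ℕ → ℕ)))
    (hG : AnalyticSet G)
    (G₂ : Set ((ℕ → ℕ) × ((ℕ → ℕ) × (ℕ → ℕ))))
    (hG₂ : AnalyticSet G₂)
    (hparam : ∀ A : Set ((ℕ → ℕ) × (ℕ → ℕ)), AnalyticSet A →
      ∃ ε : ℕ → ℕ, A = {p : (ℕ → ℕ) × (ℕ → ℕ) | (ε, p) ∈ G₂})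
    (hgood : ∃ S : (ℕ → ℕ) × (ℕ → ℕ) → (ℕ → ℕ), Continuous S ∧
      ∀ ε α x : ℕ → ℕ, (ε, (α, x)) ∈ G₂ ↔ (S (ε, α), x) ∈ G)
    (f : (ℕ → ℕ) → (ℕ → ℕ)) (hf : Measurable f) :
    ∃ α : ℕ → ℕ, ¬ IsMeagre ({x : ℕ → ℕ | (α, x) ∈ G} ∆ (⋃ n, b (f α n))) :=
  no_borel_witness_baire_property_analytic_general b hopen G G₂ hparam hgood f hf
end

section
/- No Borel-measurable function can witness the Baire property of co-analytic sets for all codes: let b : ℕ → Set 𝒩 be a basic open enumeration of 𝒩, let G ⊆ 𝒩 × 𝒩 be analytic, and let G₂ ⊆ 𝒩 × (𝒩 × 𝒩) be an analytic set such that (a) for every analytic A ⊆ 𝒩 × 𝒩 there exists ε ∈ 𝒩 with A = {(α, x) | (ε, (α, x)) ∈ G₂}, and (b) there is a continuous S : 𝒩 × 𝒩 → 𝒩 such that for all ε, α, x ∈ 𝒩, (ε, (α, x)) ∈ G₂ if and only if (S(ε, α), x) ∈ G. Then for every Borel-measurable function f : 𝒩 → 𝒩 there exists α ∈ 𝒩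 such that the symmetric difference (𝒩 \ G_α) Δ U_b(f α) is not meager. -/
/-!
Suppose `f` did witness the Baire property of every co-analytic section `(G_α)ᶜ`. For an open
set `U` with `(G_α)ᶜ ∆ U` meagre, `(G_α)ᶜ` is meagre iff `U = ∅`, so "`(G_α)ᶜ` is meagre" becomes
the Borel condition "`f α` codes the empty set" on `α`. Since `G` is a good universal set, every
analytic `B ⊆ 𝒩` is the preimage, under a continuous map `g`, of the codes `β` with `G_β = 𝒩`
(rather than `G_β = ∅`), so every analytic set would be Borel, hence co-analytic. This fails for
the diagonal set `{α | (α, α) ∈ G}`, whose complement is no section of `G` by Cantor's argument.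
-/

open Set MeasureTheory
open scoped symmDiff

local notation "𝒩" => ℕ → ℕ

section Meagre

variable {X : Type*} [TopologicalSpace X]

lemma IsMeagre.isMeagre_iff_of_symmDiff {s t : Set X} (h : IsMeagre (s ∆ t)) :
    IsMeagre s ↔ IsMeagre t :=
  ⟨fun hs => (h.union hs).mono (le_symmDiff_sup_left s t),
    fun ht => (h.union ht).mono (le_symmDiff_sup_right s t)⟩

lemma IsOpen.isMeagre_iff_eq_empty [BaireSpace X] {U : Set X} (hU : IsOpen U) :
    IsMeagre U ↔ U = ∅ := by
  refine ⟨fun h => ?_, fun h => h ▸ IsMeagre.empty⟩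
  by_contra hne
  exact not_isMeagre_of_isOpen hU (nonempty_iff_ne_empty.2 hne) h

end Meagre

lemma measurableSet_setOf_iUnion_eq_empty {X Y : Type*} [MeasurableSpace X] (b : ℕ → Set Y)
    {h : X → 𝒩} (hh : Measurable h) : MeasurableSet {x | ⋃ n, b (h x n) = ∅} := by
  simp only [iUnion_eq_empty, ofPred_forall]
  exact MeasurableSet.iInter fun n =>
    (measurable_pi_apply n).comp hh (MeasurableSet.of_discrete (s := {k | b k = ∅}))

lemma compl_setOf_diag_mem_ne_setOf_mem {X : Type*} (G : Set (X × X)) (β : X) :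
    {x | (x, x) ∈ G}ᶜ ≠ {x | (β, x) ∈ G} := by
  intro h
  have := Set.ext_iff.1 h β
  simp only [mem_compl_iff, mem_ofPred_eq] at this
  exact (iff_not_self this.symm).elim

section GoodUniversal

variable {Y : Type*} [TopologicalSpace Y]

def IsGoodUniversal (G : Set (𝒩 × Y)) : Prop :=
  ∀ A : Set (𝒩 × Y), AnalyticSet A →
    ∃ g : 𝒩 → 𝒩, Continuous g ∧ ∀ α y, (α, y) ∈ A ↔ (g α, y) ∈ G

lemma isGoodUniversal_of_parametrization {G : Set (𝒩 × Y)} {G₂ : Set (𝒩 × (𝒩 × Y))}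
    (hparam : ∀ A : Set (𝒩 × Y), AnalyticSet A → ∃ ε : 𝒩, A = {p | (ε, p) ∈ G₂})
    (hgood : ∃ S : 𝒩 × 𝒩 → 𝒩, Continuous S ∧ ∀ ε α y, (ε, (α, y)) ∈ G₂ ↔ (S (ε, α), y) ∈ G) :
    IsGoodUniversal G := by
  obtain ⟨S, hS, hSG⟩ := hgood
  intro A hA
  obtain ⟨ε, rfl⟩ := hparam A hA
  exact ⟨fun α => S (ε, α), hS.comp (continuous_const.prodMk continuous_id), hSG ε⟩

namespace IsGoodUniversal

variable [PolishSpace Y] {G : Set (𝒩 × Y)}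

lemma exists_setOf_mem_eq (hG : IsGoodUniversal G) {B : Set Y} (hB : AnalyticSet B) :
    ∃ β, {y | (β, y) ∈ G} = B := by
  obtain ⟨g, -, hg⟩ := hG _ (hB.preimage continuous_snd)
  exact ⟨g 0, ext fun y => (hg 0 y).symm⟩

lemma measurableSet_of_isMeagre_symmDiff [Nonempty Y] (hG : IsGoodUniversal G)
    {b : ℕ → Set Y} (hopen : ∀ s, IsOpen (b s)) {f : 𝒩 → 𝒩} (hf : Measurable f)
    (hwit : ∀ α, IsMeagre ({y | (α, y) ∈ G}ᶜ ∆ ⋃ n, b (f α n)))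
    {B : Set 𝒩} (hB : AnalyticSet B) : MeasurableSet B := by
  obtain ⟨g, hg, hgG⟩ := hG _ (hB.preimage continuous_fst)
  suffices B = {α | ⋃ n, b (f (g α) n) = ∅} from
    this ▸ measurableSet_setOf_iUnion_eq_empty b (hf.comp hg.measurable)
  ext α
  rw [mem_ofPred_eq, ← (isOpen_iUnion fun n => hopen _).isMeagre_iff_eq_empty,
    ← (hwit (g α)).isMeagre_iff_of_symmDiff]
  by_cases hα : α ∈ B
  · have hsec : {y | (g α, y) ∈ G}ᶜ = ∅ := by
      ext y; simpa [← hgG] using hα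
    simp [hα, hsec, IsMeagre.empty]
  · have hsec : {y | (g α, y) ∈ G}ᶜ = univ := by
      ext y; simpa [← hgG] using hα
    simp [hα, hsec, not_isMeagre_of_isOpen isOpen_univ univ_nonempty]

end IsGoodUniversal

end GoodUniversal

lemma IsGoodUniversal.not_analyticSet_compl_setOf_diag_mem {G : Set (𝒩 × 𝒩)}
    (hG : IsGoodUniversal G) : ¬ AnalyticSet {α | (α, α) ∈ G}ᶜ := fun hD =>
  let ⟨β, hβ⟩ := hG.exists_setOf_mem_eq hD
  compl_setOf_diag_mem_ne_setOf_mem G β hβ.symm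

theorem no_borel_witness_baire_property_coanalytic_general
    (b : ℕ → Set (ℕ → ℕ))
    (hopen : ∀ s, IsOpen (b s))
    (G : Set ((ℕ → ℕ) × (ℕ → ℕ)))
    (hG : AnalyticSet G)
    (G₂ : Set ((ℕ → ℕ) × ((ℕ → ℕ) × (ℕ → ℕ))))
    (hparam : ∀ A : Set ((ℕ → ℕ) × (ℕ → ℕ)), AnalyticSet A →
      ∃ ε : ℕ → ℕ, A = {p : (ℕ → ℕ) × (ℕ → ℕ) | (ε, p) ∈ G₂})
    (hgood : ∃ S : (ℕ → ℕ) × (ℕ → ℕ) → (ℕ → ℕ), Continuous S ∧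
      ∀ ε α x : ℕ → ℕ, (ε, (α, x)) ∈ G₂ ↔ (S (ε, α), x) ∈ G)
    (f : (ℕ → ℕ) → (ℕ → ℕ)) (hf : Measurable f) :
    ∃ α : ℕ → ℕ, ¬ IsMeagre ({x : ℕ → ℕ | (α, x) ∈ G}ᶜ ∆ (⋃ n, b (f α n))) := by
  by_contra! hwit
  have hU : IsGoodUniversal G := isGoodUniversal_of_parametrization hparam hgood
  have hdiag : AnalyticSet {α | (α, α) ∈ G} := hG.preimage (continuous_id.prodMk continuous_id)
  exact hU.not_analyticSet_compl_setOf_diag_mem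
    (hU.measurableSet_of_isMeagre_symmDiff hopen hf hwit hdiag).compl.analyticSet

theorem no_borel_witness_baire_property_coanalytic
    (b : ℕ → Set (ℕ → ℕ))
    (hopen : ∀ s, IsOpen (b s))
    (hbasis : TopologicalSpace.IsTopologicalBasis (Set.range b))
    (hempty : (∅ : Set (ℕ → ℕ)) ∈ Set.range b)
    (G : Set ((ℕ → ℕ) × (ℕ → ℕ)))
    (hG : AnalyticSet G)
    (G₂ : Set ((ℕ → ℕ) × ((ℕ → ℕ) × (ℕ → ℕ))))
    (hG₂ : AnalyticSet G₂)
    (hparam : ∀ A : Set ((ℕ → ℕ) × (ℕ → ℕ)), AnalyticSet A →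
      ∃ ε : ℕ → ℕ, A = {p : (ℕ → ℕ) × (ℕ → ℕ) | (ε, p) ∈ G₂})
    (hgood : ∃ S : (ℕ → ℕ) × (ℕ → ℕ) → (ℕ → ℕ), Continuous S ∧
      ∀ ε α x : ℕ → ℕ, (ε, (α, x)) ∈ G₂ ↔ (S (ε, α), x) ∈ G)
    (f : (ℕ → ℕ) → (ℕ → ℕ)) (hf : Measurable f) :
    ∃ α : ℕ → ℕ, ¬ IsMeagre ({x : ℕ → ℕ | (α, x) ∈ G}ᶜ ∆ (⋃ n, b (f α n))) :=
  no_borel_witness_baire_property_coanalytic_general b hopen G hG G₂ hparam hgood f hf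
end
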